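/- For integers n ≥ 1 and p ≥ 1, the Grundy domination number of the Sierpiński graph S_p^n is γ_gr(S_p^n) = p^{n-1} + p(p^{n-1} - 1)/2. -/

import Mathlib

/-- The closed neighborhood `N[v] = {v} ∪ N(v)` of a vertex. -/
def closedNbhd {V : Type*} (G : SimpleGraph V) (v : V) : Set V :=
  insert v (G.neighborSet v)

/-- A sequence (list) of pairwise distinct vertices is legal if each vertex
footprints some vertex not dominated by the previous ones. -/
def IsLegalSeq {V : Type*} (G : SimpleGraph V) (l : List V) : Prop :=
  l.Nodup ∧ ∀ i : Fin l.length, ∃ u,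
    u ∈ closedNbhd G (l.get i) ∧
    ∀ j : Fin l.length, (j : ℕ) < (i : ℕ) → u ∉ closedNbhd G (l.get j)

/-- A legal dominating sequence. -/
def IsDomSeq {V : Type*} (G : SimpleGraph V) (l : List V) : Prop :=
  IsLegalSeq G l ∧ ∀ u : V, ∃ v ∈ l, u ∈ closedNbhd G v

/-- The Grundy domination number: the maximum length of a legal dominating sequence. -/
noncomputable def grundyDomNum {V : Type*} (G : SimpleGraph V) : ℕ :=
  sSup {k : ℕ | ∃ l : List V, IsDomSeq G l ∧ l.length = k}

/-- The Sierpiński graph `S_p^n` on vertex set `{0,…,p-1}^n`: two distinct vertices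
`u` and `v` are adjacent iff there is a coordinate `h` with `u t = v t` for `t < h`,
`u h ≠ v h`, and `u t = v h`, `v t = u h` for all `t > h`. -/
def sierpinskiGraph (p n : ℕ) : SimpleGraph (Fin n → Fin p) :=
  SimpleGraph.fromRel (fun u v => ∃ h : Fin n,
    (∀ t : Fin n, t < h → u t = v t) ∧ u h ≠ v h ∧
    (∀ t : Fin n, h < t → u t = v h ∧ v t = u h))

/-!
Pairing each vertex of a legal sequence with one of its footprints gives a staircase of pairs
`(v_i, u_i)` with `u_i ∈ N[v_i]` and `u_j ∉ N[v_i]` for `i < j`; conversely every staircase is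
legal and extends to a dominating one, so `γ_gr` is the maximal length of a staircase.

In `S_p^(n+1)` a pair of a staircase either lies in one copy `iS_p^n`, and these pairs form a
staircase of `S_p^n` after dropping the first letter, or it joins the extreme vertices `ij…j` and
`ji…i` of two copies; two such cross pairs cannot use the same two copies. Hence
`γ_gr(S_p^(n+1)) ≤ p γ_gr(S_p^n) + C(p,2)`, while `γ_gr(S_p^1) = 1`.

For equality, take a staircase of `S_p^n` in which `0…0` is the only extreme vertex used as a
vertex and `(p-1)…(p-1)` the only one used as a footprint. Put a copy of it into every copy `i`,
preceded by the cross pairs `(ji…i, ij…j)` for `j < i`: the result is a staircase of the same kind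
in `S_p^(n+1)`, of length `p γ_gr(S_p^n) + C(p,2)`.
-/

theorem List.length_eq_sum_length_filter {α β : Type*} [Fintype β] [DecidableEq β] (l : List α)
    (f : α → β) : l.length = ∑ b, (l.filter (f · = b)).length := by
  have := Multiset.sum_count_eq_card (s := Finset.univ) (m := (l.map f : Multiset β)) (by simp)
  simpa [List.count, List.countP_eq_length_filter, List.filter_map, Function.comp_def,
    _root_.beq_eq_decide] using this.symm

theorem Fin.cons_eq_const_iff {α : Type*} {n : ℕ} {i k : α} {w : Fin n → α} :
    (Fin.cons i w : Fin (n + 1) → α) = (fun _ => k) ↔ i = k ∧ w = fun _ => k := by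
  rw [← Fin.cons_self_tail (fun _ : Fin (n + 1) => k), Fin.cons_inj]
  rfl

theorem mem_closedNbhd {V : Type*} {G : SimpleGraph V} {u v : V} :
    u ∈ closedNbhd G v ↔ u = v ∨ G.Adj v u :=
  Set.mem_insert_iff

theorem self_mem_closedNbhd {V : Type*} (G : SimpleGraph V) (v : V) : v ∈ closedNbhd G v :=
  Set.mem_insert v _

/-- A legal sequence `v_i` together with a footprint `u_i` of each `v_i`, as the list of pairs
`(v_i, u_i)`; the `v_i` are then automatically distinct. -/
def IsStaircase {V : Type*} (G : SimpleGraph V) (s : List (V × V)) : Prop :=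
  (∀ x ∈ s, x.2 ∈ closedNbhd G x.1) ∧ s.Pairwise fun a b => b.2 ∉ closedNbhd G a.1

theorem IsLegalSeq.exists_isStaircase {V : Type*} {G : SimpleGraph V} {l : List V}
    (h : IsLegalSeq G l) : ∃ s, IsStaircase G s ∧ s.length = l.length := by
  choose f hf_mem hf_not_mem using h.2
  refine ⟨(List.finRange l.length).map fun i => (l.get i, f i), ⟨?_, ?_⟩, by simp⟩
  · simpa using hf_mem
  · rw [List.pairwise_map]
    exact (List.pairwise_lt_finRange l.length).imp fun hij => hf_not_mem _ _ hij

namespace IsStaircase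

variable {V : Type*} {G : SimpleGraph V} {s t : List (V × V)}

theorem sublist (h : IsStaircase G s) (hts : t.Sublist s) : IsStaircase G t :=
  ⟨fun x hx => h.1 x (hts.subset hx), h.2.sublist hts⟩

theorem nodup_map_fst (h : IsStaircase G s) : (s.map Prod.fst).Nodup := by
  refine List.pairwise_map.mpr (h.2.imp_of_mem fun {a b} _ hb hab heq => hab ?_)
  exact heq ▸ h.1 b hb

theorem isLegalSeq (h : IsStaircase G s) : IsLegalSeq G (s.map Prod.fst) := by
  refine ⟨h.nodup_map_fst, fun i => ⟨(s[i.1]'(by simpa using i.2)).2, ?_, fun j hji => ?_⟩⟩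
  · simpa using h.1 _ (List.getElem_mem _)
  · simpa using List.pairwise_iff_getElem.mp h.2 j i (by simpa using j.2) (by simpa using i.2) hji

theorem length_le_card [Fintype V] (h : IsStaircase G s) : s.length ≤ Fintype.card V := by
  simpa using h.nodup_map_fst.length_le_card

theorem append_singleton (h : IsStaircase G s) {u : V} (hu : ∀ x ∈ s, u ∉ closedNbhd G x.1) :
    IsStaircase G (s ++ [(u, u)]) := by
  refine ⟨?_, List.pairwise_append.mpr ⟨h.2, List.pairwise_singleton _ _, ?_⟩⟩
  · simp only [List.mem_append, List.mem_singleton]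
    rintro x (hx | rfl)
    exacts [h.1 x hx, self_mem_closedNbhd G u]
  · simpa using hu

theorem exists_dominating [Fintype V] {s : List (V × V)} (h : IsStaircase G s) :
    ∃ t, IsStaircase G t ∧ s.length ≤ t.length ∧ ∀ u, ∃ x ∈ t, u ∈ closedNbhd G x.1 := by
  by_cases hdom : ∀ u, ∃ x ∈ s, u ∈ closedNbhd G x.1
  · exact ⟨s, h, le_rfl, hdom⟩
  push Not at hdom
  obtain ⟨u, hu⟩ := hdom
  have h' := h.append_singleton hu
  have : Fintype.card V - (s ++ [(u, u)]).length < Fintype.card V - s.length := by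
    have := h'.length_le_card
    simp only [List.length_append, List.length_singleton] at *
    omega
  obtain ⟨t, ht, hlen, htdom⟩ := h'.exists_dominating
  exact ⟨t, ht, by simp only [List.length_append] at hlen; omega, htdom⟩
termination_by Fintype.card V - s.length

theorem length_le_one (hG : ∀ u v, u ∈ closedNbhd G v) (h : IsStaircase G s) : s.length ≤ 1 := by
  match s, h with
  | [], _ => simp
  | [_], _ => simp
  | x :: y :: _, h => exact absurd (hG y.2 x.1) ((List.pairwise_cons.mp h.2).1 y (by simp))

end IsStaircase

theorem grundyDomNum_eq_of_isStaircase {V : Type*} [Fintype V] {G : SimpleGraph V} {k : ℕ}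
    (hle : ∀ s, IsStaircase G s → s.length ≤ k) (hex : ∃ s, IsStaircase G s ∧ s.length = k) :
    grundyDomNum G = k := by
  refine IsGreatest.csSup_eq ⟨?_, ?_⟩
  · obtain ⟨s, hs, rfl⟩ := hex
    obtain ⟨t, ht, hst, htdom⟩ := hs.exists_dominating
    refine ⟨t.map Prod.fst, ⟨ht.isLegalSeq, fun u => ?_⟩, ?_⟩
    · obtain ⟨x, hx, hux⟩ := htdom u
      exact ⟨x.1, List.mem_map_of_mem hx, hux⟩
    · simpa using le_antisymm (hle t ht) hst
  · rintro _ ⟨l, hl, rfl⟩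
    obtain ⟨s, hs, hlen⟩ := hl.1.exists_isStaircase
    exact hlen ▸ hle s hs

theorem sierpinskiGraph_adj_cons {p n : ℕ} {i j : Fin p} {x y : Fin n → Fin p} :
    (sierpinskiGraph p (n + 1)).Adj (Fin.cons i x) (Fin.cons j y) ↔
      (i = j ∧ (sierpinskiGraph p n).Adj x y) ∨ (i ≠ j ∧ x = (fun _ => j) ∧ y = fun _ => i) := by
  simp only [sierpinskiGraph, SimpleGraph.fromRel_adj, Fin.exists_fin_succ, Fin.forall_fin_succ,
    Fin.cons_zero, Fin.cons_succ, Fin.succ_lt_succ_iff, Fin.succ_pos, Fin.not_lt_zero, funext_iff]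
  by_cases h : i = j
  · subst h
    simp
  · simp [h, Ne.symm h, forall_and, and_comm]

section Sierpinski

variable {p n : ℕ}

theorem cons_mem_closedNbhd_cons_iff {i : Fin p} {a b : Fin n → Fin p} :
    (Fin.cons i a : Fin (n + 1) → Fin p) ∈ closedNbhd (sierpinskiGraph p (n + 1)) (Fin.cons i b) ↔
      a ∈ closedNbhd (sierpinskiGraph p n) b := by
  simp [mem_closedNbhd, sierpinskiGraph_adj_cons]

theorem cons_mem_closedNbhd_cons_iff_of_ne {i j : Fin p} (hij : i ≠ j) {a b : Fin n → Fin p} :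
    (Fin.cons j a : Fin (n + 1) → Fin p) ∈ closedNbhd (sierpinskiGraph p (n + 1)) (Fin.cons i b) ↔
      b = (fun _ => j) ∧ a = fun _ => i := by
  simp [mem_closedNbhd, sierpinskiGraph_adj_cons, hij, Ne.symm hij]

theorem mem_closedNbhd_sierpinskiGraph_one (u v : Fin 1 → Fin p) :
    u ∈ closedNbhd (sierpinskiGraph p 1) v := by
  rw [← Fin.cons_self_tail u, ← Fin.cons_self_tail v]
  by_cases h : v 0 = u 0
  · rw [h, cons_mem_closedNbhd_cons_iff, Subsingleton.elim (Fin.tail u) (Fin.tail v)]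
    exact self_mem_closedNbhd _ _
  · rw [cons_mem_closedNbhd_cons_iff_of_ne h]
    exact ⟨Subsingleton.elim _ _, Subsingleton.elim _ _⟩

theorem eq_cons_const_of_mem_closedNbhd {u v : Fin (n + 1) → Fin p}
    (huv : u ∈ closedNbhd (sierpinskiGraph p (n + 1)) v) (h : v 0 ≠ u 0) :
    v = Fin.cons (v 0) (fun _ => u 0) ∧ u = Fin.cons (u 0) (fun _ => v 0) := by
  rw [← Fin.cons_self_tail u, ← Fin.cons_self_tail v, cons_mem_closedNbhd_cons_iff_of_ne h] at huv
  refine ⟨?_, ?_⟩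
  · conv_lhs => rw [← Fin.cons_self_tail v, huv.1]
  · conv_lhs => rw [← Fin.cons_self_tail u, huv.2]

theorem isStaircase_map_cons_iff (i : Fin p) {s : List ((Fin n → Fin p) × (Fin n → Fin p))} :
    IsStaircase (sierpinskiGraph p (n + 1)) (s.map (Prod.map (Fin.cons i) (Fin.cons i))) ↔
      IsStaircase (sierpinskiGraph p n) s := by
  simp only [IsStaircase, List.forall_mem_map, List.pairwise_map, Prod.map_fst, Prod.map_snd,
    cons_mem_closedNbhd_cons_iff]

end Sierpinski

/-- The Grundy domination number of `S_p^(n+1)` (note the shift of `n`), by its recursion. -/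
def sierpinskiGrundy (p : ℕ) : ℕ → ℕ
  | 0 => 1
  | n + 1 => p * sierpinskiGrundy p n + p.choose 2

namespace IsStaircase

variable {p n : ℕ} {s : List ((Fin (n + 1) → Fin p) × (Fin (n + 1) → Fin p))}

theorem map_tail (h : IsStaircase (sierpinskiGraph p (n + 1)) s) {c : Fin p}
    (hs : ∀ x ∈ s, x.1 0 = c ∧ x.2 0 = c) :
    IsStaircase (sierpinskiGraph p n) (s.map (Prod.map Fin.tail Fin.tail)) := by
  rw [← isStaircase_map_cons_iff c, List.map_map]
  convert h
  conv_rhs => rw [← List.map_id s]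
  refine List.map_congr_left fun x hx => Prod.ext ?_ ?_
  · simp [← (hs x hx).1]
  · simp [← (hs x hx).2]

theorem length_le_choose_two (h : IsStaircase (sierpinskiGraph p (n + 1)) s)
    (hs : ∀ x ∈ s, x.1 0 ≠ x.2 0) : s.length ≤ p.choose 2 := by
  classical
  have hshape : ∀ x ∈ s, x.1 = Fin.cons (x.1 0) (fun _ => x.2 0) ∧
      x.2 = Fin.cons (x.2 0) (fun _ => x.1 0) :=
    fun x hx => eq_cons_const_of_mem_closedNbhd (h.1 x hx) (hs x hx)
  -- of two cross pairs between the same copies, the later footprint is the earlier pair's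
  -- footprint or vertex
  have hnodup : (s.map fun x => s(x.1 0, x.2 0)).Nodup := by
    refine List.pairwise_map.mpr (h.2.imp_of_mem fun {a b} ha hb hab heq => hab ?_)
    rcases Sym2.eq_iff.mp heq with ⟨h1, h2⟩ | ⟨h1, h2⟩
    · rw [(hshape b hb).2, ← h1, ← h2, ← (hshape a ha).2]
      exact h.1 a ha
    · rw [(hshape b hb).2, ← h1, ← h2, ← (hshape a ha).1]
      exact self_mem_closedNbhd _ _
  have hsub : (s.map fun x => s(x.1 0, x.2 0)).toFinset ⊆ Finset.univ.filter (¬ ·.IsDiag) := by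
    intro z hz
    obtain ⟨x, hx, rfl⟩ := List.mem_map.mp (List.mem_toFinset.mp hz)
    simpa using hs x hx
  calc s.length = (s.map fun x => s(x.1 0, x.2 0)).toFinset.card := by
        rw [List.toFinset_card_of_nodup hnodup, List.length_map]
    _ ≤ (Finset.univ.filter (¬ ·.IsDiag : Sym2 (Fin p) → Prop)).card := Finset.card_le_card hsub
    _ = p.choose 2 := by rw [← Fintype.card_subtype, Sym2.card_subtype_not_diag, Fintype.card_fin]

end IsStaircase

theorem IsStaircase.length_le_sierpinskiGrundy {p : ℕ} :
    ∀ {n : ℕ} {s : List ((Fin (n + 1) → Fin p) × (Fin (n + 1) → Fin p))},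
      IsStaircase (sierpinskiGraph p (n + 1)) s → s.length ≤ sierpinskiGrundy p n
  | 0, _, h => h.length_le_one mem_closedNbhd_sierpinskiGraph_one
  | n + 1, s, h => by
    classical
    let copy : (Fin (n + 2) → Fin p) × (Fin (n + 2) → Fin p) → Option (Fin p) :=
      fun x => if x.1 0 = x.2 0 then some (x.1 0) else none
    have hcross : (s.filter (copy · = none)).length ≤ p.choose 2 :=
      (h.sublist List.filter_sublist).length_le_choose_two fun x hx => by
        simpa [copy] using (List.mem_filter.mp hx).2
    have hcopy (c : Fin p) : (s.filter (copy · = some c)).length ≤ sierpinskiGrundy p n := by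
      have hc : ∀ x ∈ s.filter (copy · = some c), x.1 0 = c ∧ x.2 0 = c := fun x hx => by
        obtain ⟨hx0, rfl⟩ : x.1 0 = x.2 0 ∧ x.1 0 = c := by
          simpa [copy] using (List.mem_filter.mp hx).2
        exact ⟨rfl, hx0.symm⟩
      simpa using ((h.sublist List.filter_sublist).map_tail hc).length_le_sierpinskiGrundy
    calc s.length = (s.filter (copy · = none)).length + ∑ c, (s.filter (copy · = some c)).length :=
          by rw [List.length_eq_sum_length_filter s copy, Fintype.sum_option]
      _ ≤ p.choose 2 + ∑ _c : Fin p, sierpinskiGrundy p n :=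
          Nat.add_le_add hcross (Finset.sum_le_sum fun c _ => hcopy c)
      _ = sierpinskiGrundy p (n + 1) := by simp [sierpinskiGrundy, add_comm]

section Construction

variable {p n q : ℕ}

def crossPair (j i : Fin p) : (Fin (n + 1) → Fin p) × (Fin (n + 1) → Fin p) :=
  (Fin.cons j fun _ => i, Fin.cons i fun _ => j)

/-- Each cross pair comes after the copy of its vertex and before the copy of its footprint. -/
noncomputable def stairStep (s : List ((Fin n → Fin p) × (Fin n → Fin p))) :
    List ((Fin (n + 1) → Fin p) × (Fin (n + 1) → Fin p)) :=
  (List.finRange p).flatMap fun i =>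
    (Finset.Iio i).toList.map (crossPair · i) ++ s.map (Prod.map (Fin.cons i) (Fin.cons i))

theorem mem_stairStep {s : List ((Fin n → Fin p) × (Fin n → Fin p))} {x} :
    x ∈ stairStep s ↔ ∃ i, (∃ j < i, crossPair j i = x) ∨
      ∃ y ∈ s, Prod.map (Fin.cons i) (Fin.cons i) y = x := by
  simp [stairStep]

theorem length_stairStep (s : List ((Fin n → Fin p) × (Fin n → Fin p))) :
    (stairStep s).length = p * s.length + p.choose 2 := by
  simp only [stairStep, List.length_flatMap, List.length_append, List.length_map,
    Finset.length_toList, Fin.card_Iio, ← Fin.sum_univ_def, Finset.sum_add_distrib,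
    Fin.sum_univ_eq_sum_range (fun i => i), Finset.sum_range_id, Finset.sum_const,
    Finset.card_univ, Fintype.card_fin, smul_eq_mul, Nat.choose_two_right]
  ring

def UsesExtremesAtEnds (s : List ((Fin n → Fin (q + 1)) × (Fin n → Fin (q + 1)))) : Prop :=
  ∀ x ∈ s, ∀ k, (x.1 = (fun _ => k) → k = 0) ∧ (x.2 = (fun _ => k) → k = Fin.last q)

theorem UsesExtremesAtEnds.stairStep
    {s : List ((Fin (n + 1) → Fin (q + 1)) × (Fin (n + 1) → Fin (q + 1)))}
    (h : UsesExtremesAtEnds s) : UsesExtremesAtEnds (stairStep s) := by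
  intro x hx k
  obtain ⟨i, ⟨j, hji, rfl⟩ | ⟨y, hy, rfl⟩⟩ := mem_stairStep.mp hx
  · simp only [crossPair, Fin.cons_eq_const_iff]
    refine ⟨fun ⟨hjk, hik⟩ => ?_, fun ⟨hik, hjk⟩ => ?_⟩
    · exact absurd (hjk.trans (congrFun hik 0).symm) hji.ne
    · exact absurd ((congrFun hjk 0).trans hik.symm) hji.ne
  · simp only [Prod.map_fst, Prod.map_snd, Fin.cons_eq_const_iff]
    exact ⟨fun hk => (h y hy k).1 hk.2, fun hk => (h y hy k).2 hk.2⟩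

theorem IsStaircase.stairStep
    {s : List ((Fin (n + 1) → Fin (q + 1)) × (Fin (n + 1) → Fin (q + 1)))}
    (hs : IsStaircase (sierpinskiGraph (q + 1) (n + 1)) s) (he : UsesExtremesAtEnds s) :
    IsStaircase (sierpinskiGraph (q + 1) (n + 2)) (stairStep s) := by
  refine ⟨fun x hx => ?_, List.pairwise_flatMap.mpr ⟨fun i _ => ?_, ?_⟩⟩
  · obtain ⟨i, ⟨j, hji, rfl⟩ | ⟨y, hy, rfl⟩⟩ := mem_stairStep.mp hx
    · exact (cons_mem_closedNbhd_cons_iff_of_ne hji.ne).mpr ⟨rfl, rfl⟩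
    · exact cons_mem_closedNbhd_cons_iff.mpr (hs.1 y hy)
  · refine List.pairwise_append.mpr ⟨?_, ((isStaircase_map_cons_iff i).mpr hs).2, ?_⟩
    · refine List.pairwise_map.mpr ((Finset.nodup_toList _).imp_of_mem
        fun {j j'} hj _ hne hmem => hne ?_)
      rw [Finset.mem_toList, Finset.mem_Iio] at hj
      rw [crossPair, crossPair, cons_mem_closedNbhd_cons_iff_of_ne hj.ne] at hmem
      exact (congrFun hmem.2 0).symm
    · simp only [List.mem_map, Finset.mem_toList, Finset.mem_Iio]
      rintro _ ⟨j, hj, rfl⟩ _ ⟨y, hy, rfl⟩ hmem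
      rw [crossPair, Prod.map_snd, cons_mem_closedNbhd_cons_iff_of_ne hj.ne] at hmem
      exact (hj.trans_le (Fin.le_last i)).ne ((he y hy j).2 hmem.2)
  · refine (List.pairwise_lt_finRange _).imp fun {i i'} hii' a ha b hb hmem => ?_
    obtain ⟨α, hα, w, haw, hw⟩ : ∃ α < i', ∃ w, a.1 = Fin.cons α w ∧ w ≠ fun _ => i' := by
      simp only [List.mem_append, List.mem_map, Finset.mem_toList, Finset.mem_Iio] at ha
      rcases ha with ⟨j, hj, rfl⟩ | ⟨y, hy, rfl⟩
      · exact ⟨j, hj.trans hii', _, rfl, fun h => hii'.ne (congrFun h 0)⟩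
      · exact ⟨i, hii', _, rfl, fun h => Fin.not_lt_zero i ((he y hy i').1 h ▸ hii')⟩
    obtain ⟨β, hbβ⟩ : ∃ β, b.2 = Fin.cons i' β := by
      simp only [List.mem_append, List.mem_map] at hb
      rcases hb with ⟨j, -, rfl⟩ | ⟨y, -, rfl⟩ <;> exact ⟨_, rfl⟩
    rw [haw, hbβ, cons_mem_closedNbhd_cons_iff_of_ne hα.ne] at hmem
    exact hw hmem.1

end Construction

noncomputable def sierpinskiStair (q : ℕ) :
    (n : ℕ) → List ((Fin (n + 1) → Fin (q + 1)) × (Fin (n + 1) → Fin (q + 1)))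
  | 0 => [(fun _ => 0, fun _ => Fin.last q)]
  | n + 1 => stairStep (sierpinskiStair q n)

theorem sierpinskiStair_spec (q : ℕ) : ∀ n,
    IsStaircase (sierpinskiGraph (q + 1) (n + 1)) (sierpinskiStair q n) ∧
      UsesExtremesAtEnds (sierpinskiStair q n) ∧
      (sierpinskiStair q n).length = sierpinskiGrundy (q + 1) n
  | 0 => by
    refine ⟨⟨by simp [mem_closedNbhd_sierpinskiGraph_one], List.pairwise_singleton _ _⟩, ?_, rfl⟩
    simp only [UsesExtremesAtEnds, sierpinskiStair, List.mem_singleton, forall_eq]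
    exact fun k => ⟨fun h => (congrFun h 0).symm, fun h => (congrFun h 0).symm⟩
  | n + 1 =>
    have ⟨hs, he, hlen⟩ := sierpinskiStair_spec q n
    ⟨hs.stairStep he, he.stairStep, by rw [sierpinskiStair, length_stairStep, hlen]; rfl⟩

theorem grundyDomNum_sierpinskiGraph (q n : ℕ) :
    grundyDomNum (sierpinskiGraph (q + 1) (n + 1)) = sierpinskiGrundy (q + 1) n :=
  grundyDomNum_eq_of_isStaircase (fun _ => IsStaircase.length_le_sierpinskiGrundy)
    ⟨_, (sierpinskiStair_spec q n).1, (sierpinskiStair_spec q n).2.2⟩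

theorem two_mul_sierpinskiGrundy (p : ℕ) :
    ∀ n, 2 * sierpinskiGrundy p n = 2 * p ^ n + p * (p ^ n - 1)
  | 0 => by simp [sierpinskiGrundy]
  | n + 1 => by
    rcases Nat.eq_zero_or_pos p with rfl | hp
    · simp [sierpinskiGrundy]
    have hchoose : 2 * p.choose 2 = p * (p - 1) := by
      rw [Nat.choose_two_right]
      exact Nat.mul_div_cancel' (Nat.even_mul_pred_self p).two_dvd
    have hpow : 1 ≤ p ^ n := Nat.one_le_pow _ _ hp
    have hpow' : 1 ≤ p ^ n * p := Nat.one_le_pow _ _ hp |>.trans_eq (pow_succ p n)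
    rw [sierpinskiGrundy, mul_add, hchoose, mul_left_comm, two_mul_sierpinskiGrundy p n, pow_succ]
    zify [hp, hpow, hpow']
    ring

theorem sierpinskiGrundy_eq (p n : ℕ) : sierpinskiGrundy p n = p ^ n + p * (p ^ n - 1) / 2 := by
  have := two_mul_sierpinskiGrundy p n
  omega

theorem grundy_sierpinski (p n : ℕ) (hp : 1 ≤ p) (hn : 1 ≤ n) :
    grundyDomNum (sierpinskiGraph p n) = p ^ (n - 1) + p * (p ^ (n - 1) - 1) / 2 := by
  obtain ⟨q, rfl⟩ : ∃ q, p = q + 1 := ⟨p - 1, by omega⟩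
  obtain ⟨m, rfl⟩ : ∃ m, n = m + 1 := ⟨n - 1, by omega⟩
  rw [grundyDomNum_sierpinskiGraph, sierpinskiGrundy_eq, Nat.add_sub_cancel]
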